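/- arXiv:1208.0017 — 2 statements merged into one kernel-verified Lean document; each statement's English description precedes it below -/
import Mathlib

section
/- Let N > m > 1, m* = Nm/(N−m), λ > 0, and s₀ ≥ e². Let f : ℝ → ℝ be continuous with f(s) = s^(m*−1)/(log s)^λ for all s ≥ s₀. Then Q is differentiable on (s₀, ∞) with Q'(s) = λ·(N−m)·f(s)/log(s) > 0 for every s > s₀; in particular Q is strictly increasing on [s₀, ∞). -/
open Set Filter MeasureTheory

noncomputable def phim (m x : ℝ) : ℝ := |x| ^ (m - 2) * x

noncomputable def Fint (f : ℝ → ℝ) (s : ℝ) : ℝ := ∫ t in (0:ℝ)..s, f t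

noncomputable def Qfun (N m : ℝ) (f : ℝ → ℝ) (s : ℝ) : ℝ :=
  m * N * Fint f s - (N - m) * s * f s

/-- `u` (with derivative function `u'`) is a solution of the radial quasilinear
equation on the set `J`. -/
def IsSolutionOn (N m : ℝ) (f : ℝ → ℝ) (J : Set ℝ) (u u' : ℝ → ℝ) : Prop :=
  (∀ r ∈ J, HasDerivWithinAt u (u' r) J r) ∧ ContinuousOn u' J ∧
    ∃ w' : ℝ → ℝ,
      (∀ r ∈ J ∩ Set.Ioi (0:ℝ),
        HasDerivWithinAt (fun t => phim m (u' t)) (w' r) (J ∩ Set.Ioi (0:ℝ)) r) ∧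
      ContinuousOn w' (J ∩ Set.Ioi (0:ℝ)) ∧
      ∀ r ∈ J ∩ Set.Ioi (0:ℝ), w' r + ((N - 1) / r) * phim m (u' r) + f (u r) = 0

def IsIVPSolutionOn (N m : ℝ) (f : ℝ → ℝ) (α : ℝ) (J : Set ℝ) (u u' : ℝ → ℝ) : Prop :=
  IsSolutionOn N m f J u u' ∧ u 0 = α ∧ u' 0 = 0

/-- Admissible domains for the IVP: `[0,∞)` or `[0,R)` with `0 < R`. -/
def IVPDomain (J : Set ℝ) : Prop :=
  J = Set.Ici (0:ℝ) ∨ ∃ R : ℝ, 0 < R ∧ J = Set.Ico (0:ℝ) R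

/-- The solution `u` of the IVP on `J` cannot be extended to a solution on a
strictly larger admissible domain. -/
def Noncontinuable (N m : ℝ) (f : ℝ → ℝ) (α : ℝ) (J : Set ℝ) (u u' : ℝ → ℝ) : Prop :=
  ∀ J' : Set ℝ, IVPDomain J' → J ⊂ J' →
    ¬ ∃ v v' : ℝ → ℝ, IsIVPSolutionOn N m f α J' v v' ∧ Set.EqOn v u J ∧ Set.EqOn v' u' J

open Classical in
/-- The filter describing the approach to the right endpoint of an IVP domain. -/
noncomputable def domEnd (J : Set ℝ) : Filter ℝ :=
  if J = Set.Ici (0:ℝ) then Filter.atTop else nhdsWithin (sSup J) (Set.Iio (sSup J))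

def LocLipschitzOn (f : ℝ → ℝ) (S : Set ℝ) : Prop :=
  ∀ x ∈ S, ∃ ε : ℝ, 0 < ε ∧ ∃ K : NNReal, LipschitzOnWith K f (Metric.ball x ε ∩ S)

/-- Assumption (f₂). -/
structure Hf2 (f : ℝ → ℝ) (βm βp : ℝ) (γm γp : EReal) : Prop where
  hβm : βm < 0
  hβp : 0 < βp
  hFneg : ∀ s : ℝ, s ∈ Set.Ioo βm βp → s ≠ 0 → Fint f s < 0
  hFβm : Fint f βm = 0
  hFβp : Fint f βp = 0
  hγp : (βp : EReal) < γp
  hγm : γm < (βm : EReal)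
  hfpos : ∀ s : ℝ, βp < s → (s : EReal) < γp → 0 < f s
  hfneg : ∀ s : ℝ, γm < (s : EReal) → s < βm → f s < 0
  hγpzero : ∀ s : ℝ, (s : EReal) = γp → f s = 0
  hγmzero : ∀ s : ℝ, (s : EReal) = γm → f s = 0
  hlim : ∃ L : EReal,
    Filter.Tendsto (fun s : ℝ => (Fint f s : EReal))
      (Filter.comap Real.toEReal (nhdsWithin γp (Set.Iio γp))) (nhds L) ∧
    Filter.Tendsto (fun s : ℝ => (Fint f s : EReal))
      (Filter.comap Real.toEReal (nhdsWithin γm (Set.Ioi γm))) (nhds L)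
  hlip : LocLipschitzOn f {s : ℝ | (γm < (s : EReal) ∧ s < 0) ∨ (0 < s ∧ (s : EReal) < γp)}

/-- Assumption (f₃). -/
def Hf3 (N m : ℝ) (f : ℝ → ℝ) (βm βp : ℝ) (γm γp : EReal) : Prop :=
  (γp = ⊤ →
    (∃ βb : ℝ, βp < βb ∧ ∀ s : ℝ, βb ≤ s → 0 ≤ Qfun N m f s) ∧
    (∃ θ : ℝ, θ ∈ Set.Ioo (0:ℝ) 1 ∧
      Filter.Tendsto (fun s : ℝ =>
        sInf ((fun p : ℝ × ℝ =>
          Qfun N m f p.2 * ((|s| ^ (m - 2) * s) / f p.1) ^ (N / m)) ''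
            (Set.Icc (θ * s) s ×ˢ Set.Icc (θ * s) s)))
        Filter.atTop Filter.atTop)) ∧
  (γm = ⊥ →
    (∃ βb : ℝ, -βb < βm ∧ ∀ s : ℝ, s ≤ -βb → 0 ≤ Qfun N m f s) ∧
    (∃ θ : ℝ, θ ∈ Set.Ioo (0:ℝ) 1 ∧
      Filter.Tendsto (fun s : ℝ =>
        sInf ((fun p : ℝ × ℝ =>
          Qfun N m f p.2 * ((|s| ^ (m - 2) * s) / f p.1) ^ (N / m)) ''
            (Set.Icc s (θ * s) ×ˢ Set.Icc s (θ * s))))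
        Filter.atBot Filter.atTop))

/-- Assumption (f₄). -/
def Hf4 (N m : ℝ) (f : ℝ → ℝ) (βm βp : ℝ) (γm γp : EReal) : Prop :=
  (γp ≠ ⊤ → ∃ L₀ : ℝ, 0 < L₀ ∧ ∃ βb : ℝ, βp < βb ∧
    ∀ s : ℝ, βb ≤ s → (s : EReal) < γp → f s ≤ L₀ * (γp.toReal - s) ^ (m - 1)) ∧
  (γm ≠ ⊥ → ∃ L₀ : ℝ, 0 < L₀ ∧ ∃ βb : ℝ, -βm < βb ∧
    ∀ s : ℝ, γm < (s : EReal) → s ≤ -βb → -f s ≤ L₀ * (s - γm.toReal) ^ (m - 1))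


/-! For a continuous `f` differentiable at `s`, `Q'(s) = (mN - (N - m)) f(s) - (N - m) s f'(s)`.
At the critical exponent `m* = Nm/(N - m)` this vanishes for the pure power `s ^ (m* - 1)`,
since `(N - m) m* = Nm`; the factor `(log s) ^ (-λ)` changes `s f'(s)` by `-λ f(s) / log s`,
and that correction is all that survives in `Q'`. -/

lemma hasDerivAt_Fint {f : ℝ → ℝ} (hf : Continuous f) (x : ℝ) :
    HasDerivAt (Fint f) (f x) x :=
  intervalIntegral.integral_hasDerivAt_right (hf.intervalIntegrable 0 x)
    (hf.stronglyMeasurableAtFilter _ _) hf.continuousAt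

lemma continuous_Qfun (N m : ℝ) {f : ℝ → ℝ} (hf : Continuous f) : Continuous (Qfun N m f) := by
  have hF : Continuous (Fint f) :=
    continuous_iff_continuousAt.2 fun x => (hasDerivAt_Fint hf x).continuousAt
  unfold Qfun
  fun_prop

lemma hasDerivAt_Qfun (N m : ℝ) {f : ℝ → ℝ} {f' s : ℝ} (hf : Continuous f)
    (hf' : HasDerivAt f f' s) :
    HasDerivAt (Qfun N m f) (m * N * f s - (N - m) * (f s + s * f')) s := by
  have hsf : HasDerivAt (fun t => t * f t) (1 * f s + s * f') s := (hasDerivAt_id' s).mul hf'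
  have hQ : Qfun N m f = fun t => m * N * Fint f t - (N - m) * (t * f t) := by
    funext t; simp only [Qfun]; ring
  rw [hQ]
  exact ((hasDerivAt_Fint hf s).const_mul (m * N)).sub (hsf.const_mul (N - m)) |>.congr_deriv
    (by ring)

lemma hasDerivAt_rpow_div_log_rpow (p lam : ℝ) {s : ℝ} (hs : 1 < s) :
    HasDerivAt (fun t => t ^ p / Real.log t ^ lam)
      ((p - lam / Real.log s) * (s ^ p / Real.log s ^ lam) / s) s := by
  have hs0 : 0 < s := by linarith
  have hL : 0 < Real.log s := Real.log_pos hs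
  have hpow := Real.hasDerivAt_rpow_const (p := p) (Or.inl hs0.ne')
  have hlog := (Real.hasDerivAt_log hs0.ne').rpow_const (p := lam) (Or.inl hL.ne')
  refine (hpow.div hlog (Real.rpow_pos_of_pos hL lam).ne').congr_deriv ?_
  rw [Real.rpow_sub_one hs0.ne', Real.rpow_sub_one hL.ne']
  field_simp

lemma hasDerivAt_Qfun_log_critical {N m lam a : ℝ} (hNm : m < N) (ha : 1 ≤ a)
    {f : ℝ → ℝ} (hf : Continuous f)
    (hfs : ∀ s, a ≤ s → f s = s ^ (N * m / (N - m) - 1) / Real.log s ^ lam)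
    {s : ℝ} (hs : a < s) :
    HasDerivAt (Qfun N m f) (lam * (N - m) * f s / Real.log s) s := by
  set p := N * m / (N - m) - 1
  have hs1 : 1 < s := ha.trans_lt hs
  have hL : 0 < Real.log s := Real.log_pos hs1
  have hfeq : (fun t => t ^ p / Real.log t ^ lam) =ᶠ[nhds s] f :=
    (eventually_ge_nhds hs).mono fun t ht => (hfs t ht).symm
  have hf' := (hasDerivAt_rpow_div_log_rpow p lam hs1).congr_of_eventuallyEq hfeq.symm
  rw [← hfs s hs.le] at hf'
  refine (hasDerivAt_Qfun N m hf hf').congr_deriv ?_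
  have hNm' : N - m ≠ 0 := sub_ne_zero.2 hNm.ne'
  have hcrit : (N - m) * (p + 1) = m * N := by simp only [p]; field_simp; ring
  field_simp
  linear_combination (-f s * Real.log s) * hcrit

theorem log_critical_example_Q_increasing_general
    (N m : ℝ) (hNm : m < N) (lam s₀ : ℝ)
    (hlam : 0 < lam) (hs₀ : Real.exp 2 ≤ s₀)
    (f : ℝ → ℝ) (hf : Continuous f)
    (hfs : ∀ s : ℝ, s₀ ≤ s → f s = s ^ (N * m / (N - m) - 1) / (Real.log s) ^ lam) :
    (∀ s : ℝ, s₀ < s →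
      HasDerivAt (Qfun N m f) (lam * (N - m) * f s / Real.log s) s ∧
      0 < lam * (N - m) * f s / Real.log s) ∧
    StrictMonoOn (Qfun N m f) (Set.Ici s₀) := by
  have hs₀1 : 1 ≤ s₀ := (Real.one_lt_exp_iff.2 two_pos).le.trans hs₀
  have hderiv : ∀ s, s₀ < s →
      HasDerivAt (Qfun N m f) (lam * (N - m) * f s / Real.log s) s ∧
      0 < lam * (N - m) * f s / Real.log s := by
    intro s hs
    have hL : 0 < Real.log s := Real.log_pos (hs₀1.trans_lt hs)
    have hfpos : 0 < f s := by
      rw [hfs s hs.le]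
      exact div_pos (Real.rpow_pos_of_pos (by linarith) _) (Real.rpow_pos_of_pos hL lam)
    have : 0 < N - m := sub_pos.2 hNm
    exact ⟨hasDerivAt_Qfun_log_critical hNm hs₀1 hf hfs hs, by positivity⟩
  refine ⟨hderiv, strictMonoOn_of_hasDerivWithinAt_pos (convex_Ici s₀)
    (f' := fun x => lam * (N - m) * f x / Real.log x)
    (continuous_Qfun N m hf).continuousOn (fun x hx => ?_) (fun x hx => ?_)⟩
  · rw [interior_Ici] at hx
    exact (hderiv x hx).1.hasDerivWithinAt
  · rw [interior_Ici] at hx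
    exact (hderiv x hx).2

/-- for the log-corrected critical nonlinearity, `Q` is
differentiable with `Q'(s) = λ(N-m) f(s)/log s > 0`, hence strictly increasing. -/
theorem log_critical_example_Q_increasing
    (N m : ℝ) (hm : 1 < m) (hNm : m < N) (lam s₀ : ℝ)
    (hlam : 0 < lam) (hs₀ : Real.exp 2 ≤ s₀)
    (f : ℝ → ℝ) (hf : Continuous f)
    (hfs : ∀ s : ℝ, s₀ ≤ s → f s = s ^ (N * m / (N - m) - 1) / (Real.log s) ^ lam) :
    (∀ s : ℝ, s₀ < s →
      HasDerivAt (Qfun N m f) (lam * (N - m) * f s / Real.log s) s ∧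
      0 < lam * (N - m) * f s / Real.log s) ∧
    StrictMonoOn (Qfun N m f) (Set.Ici s₀) :=
  log_critical_example_Q_increasing_general N m hNm lam s₀ hlam hs₀ f hf hfs
end

section
/- Let N ≥ m > 1, m' = m/(m−1), and let f : ℝ → ℝ be continuous. Let u be a solution of the IVP with initial value α > 0 on [0,R), let θ ∈ (0,1), and let r_θ ∈ (0,R) satisfy u(r_θ) = θα and θα ≤ u(r) ≤ α for all r ∈ [0, r_θ]. Set M = max{ f(s) : s ∈ [θα, α] } and assume M > 0. Then r_θ^m ≥ ((1−θ)·m')^(m−1)·N·α^(m−1)/M. -/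
open Set Filter MeasureTheory

/-!
Multiplying the equation by `r^(N-1)` gives `(r^(N-1) φ_m(u'))' = -r^(N-1) f(u) ≥ -M r^(N-1)`
as long as `u` stays in `[θα, α]`. Integrating from `0`, where `u' = 0`, yields
`φ_m(u'(r)) ≥ -(M/N) r`, that is `u'(r) ≥ -(M/N)^(1/(m-1)) r^(1/(m-1))`. Integrating once more,
`(1-θ)α = u(0) - u(r_θ) ≤ (M/N)^(1/(m-1)) r_θ^(m') / m'`, and raising this to the power `m-1`
gives the bound.
-/

open Real Topology

lemma abs_phim {m : ℝ} (hm : m ≠ 1) (x : ℝ) : |phim m x| = |x| ^ (m - 1) := by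
  rcases eq_or_ne x 0 with rfl | hx
  · simp [phim, zero_rpow (sub_ne_zero.2 hm)]
  · rw [phim, abs_mul, abs_of_nonneg (rpow_nonneg (abs_nonneg x) _),
      show m - 1 = m - 2 + 1 by ring, rpow_add_one (abs_pos.2 hx).ne']

lemma continuous_phim {m : ℝ} (hm : 1 < m) : Continuous (phim m) := by
  refine continuous_iff_continuousAt.2 fun x ↦ ?_
  rcases eq_or_ne x 0 with rfl | hx
  · have hlim : Tendsto (fun t : ℝ ↦ |t| ^ (m - 1)) (𝓝 0) (𝓝 0) := by
      simpa [zero_rpow (sub_pos.2 hm).ne'] using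
        ((continuous_abs.rpow_const fun _ ↦ Or.inr (sub_pos.2 hm).le).tendsto 0)
    simpa [ContinuousAt, phim] using
      squeeze_zero_norm (fun t ↦ (abs_phim hm.ne' t).le) hlim
  · exact ((continuousAt_rpow_const _ _ (Or.inl (abs_ne_zero.2 hx))).comp
      continuous_abs.continuousAt).mul continuousAt_id

lemma neg_rpow_inv_le_of_neg_le_phim {m c x : ℝ} (hm : 1 < m) (hc : 0 ≤ c)
    (h : -c ≤ phim m x) : -c ^ (m - 1)⁻¹ ≤ x := by
  by_contra! hlt
  have hx : x < 0 := hlt.trans_le (neg_nonpos.2 (rpow_nonneg hc _))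
  have hphim : phim m x = -|x| ^ (m - 1) := by
    rw [← abs_phim hm.ne', abs_of_nonpos, neg_neg]
    exact mul_nonpos_of_nonneg_of_nonpos (rpow_nonneg (abs_nonneg x) _) hx.le
  have hlt' : c < |x| ^ (m - 1) := by
    have hxc : c ^ (m - 1)⁻¹ < |x| := by rw [abs_of_neg hx]; linarith
    have := rpow_lt_rpow (rpow_nonneg hc _) hxc (sub_pos.2 hm)
    rwa [rpow_inv_rpow hc (sub_pos.2 hm).ne'] at this
  linarith

lemma rpow_le_mul_rpow_of_le_rpow_inv_mul {a b c k : ℝ} (hk : 0 < k) (ha : 0 ≤ a) (hb : 0 ≤ b)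
    (hc : 0 ≤ c) (h : a ≤ b ^ k⁻¹ * c) : a ^ k ≤ b * c ^ k :=
  calc a ^ k ≤ (b ^ k⁻¹ * c) ^ k := rpow_le_rpow ha h hk.le
    _ = b * c ^ k := by rw [mul_rpow (rpow_nonneg hb _) hc, rpow_inv_rpow hb hk.ne']

lemma sub_le_of_neg_mul_rpow_le_deriv {u u' : ℝ → ℝ} {R C q : ℝ} (hq : -1 < q)
    (hR : 0 ≤ R) (hu : ContinuousOn u (Icc 0 R))
    (hu' : ∀ r ∈ Ioo 0 R, HasDerivWithinAt u (u' r) (Ioo 0 R) r)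
    (hbound : ∀ r ∈ Ioo 0 R, -(C * r ^ q) ≤ u' r) :
    u 0 - u R ≤ C * R ^ (q + 1) / (q + 1) := by
  have hq1 : 0 < q + 1 := by linarith
  set F : ℝ → ℝ := fun r ↦ u r + C / (q + 1) * r ^ (q + 1)
  have hF : MonotoneOn F (Icc 0 R) := by
    refine monotoneOn_of_hasDerivWithinAt_nonneg (convex_Icc 0 R)
      (f' := fun r ↦ u' r + C * r ^ q)
      (hu.add (continuousOn_const.mul (continuousOn_id.rpow_const fun _ _ ↦ Or.inr hq1.le)))
      ?_ ?_ <;> rw [interior_Icc] <;> intro r hr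
    · have hpow := (hasDerivAt_rpow_const (p := q + 1) (Or.inl hr.1.ne')).hasDerivWithinAt
        (s := Ioo 0 R)
      refine ((hu' r hr).add (hpow.const_mul (C / (q + 1)))).congr_deriv ?_
      rw [add_sub_cancel_right]
      field_simp
    · linarith [hbound r hr]
  have := hF ⟨le_rfl, hR⟩ ⟨hR, le_rfl⟩ hR
  simp only [F, zero_rpow hq1.ne', mul_zero, add_zero] at this
  rw [mul_div_right_comm]
  linarith

namespace IsSolutionOn

variable {N m : ℝ} {f : ℝ → ℝ} {J : Set ℝ} {u u' : ℝ → ℝ}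

lemma neg_div_mul_le_phim (hsol : IsSolutionOn N m f J u u') (hm : 1 < m) (hN : 1 ≤ N)
    (hu'0 : u' 0 = 0) {R M : ℝ} (hRJ : Icc 0 R ⊆ J) (hfM : ∀ t ∈ Icc 0 R, f (u t) ≤ M)
    {r : ℝ} (hr : r ∈ Icc 0 R) : -(M / N * r) ≤ phim m (u' r) := by
  obtain ⟨-, hu'c, w', hw', -, hode⟩ := hsol
  set g : ℝ → ℝ := fun r ↦ r ^ (N - 1) * phim m (u' r) + M / N * r ^ N
  have hg : MonotoneOn g (Icc 0 R) := by
    refine monotoneOn_of_hasDerivWithinAt_nonneg (convex_Icc 0 R)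
      (f' := fun r ↦ r ^ (N - 1) * (M - f (u r)))
      (((continuousOn_id.rpow_const fun _ _ ↦ Or.inr (sub_nonneg.2 hN)).mul
        ((continuous_phim hm).comp_continuousOn (hu'c.mono hRJ))).add
        (continuousOn_const.mul (continuousOn_id.rpow_const fun _ _ ↦ Or.inr (by linarith))))
      ?_ ?_ <;> rw [interior_Icc] <;> intro r hr
    · have hrJ : r ∈ J ∩ Ioi 0 := ⟨hRJ (Ioo_subset_Icc_self hr), hr.1⟩
      have hsub : Ioo 0 R ⊆ J ∩ Ioi 0 := fun t ht ↦ ⟨hRJ (Ioo_subset_Icc_self ht), ht.1⟩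
      have hpow (p : ℝ) :=
        (hasDerivAt_rpow_const (p := p) (Or.inl hr.1.ne')).hasDerivWithinAt (s := Ioo 0 R)
      refine (((hpow (N - 1)).mul ((hw' r hrJ).mono hsub)).add
        ((hpow N).const_mul (M / N))).congr_deriv ?_
      have hw : w' r = -((N - 1) / r * phim m (u' r)) - f (u r) := by linarith [hode r hrJ]
      rw [hw, rpow_sub_one hr.1.ne']
      field_simp
      ring
    · exact mul_nonneg (rpow_nonneg hr.1.le _) (sub_nonneg.2 (hfM r (Ioo_subset_Icc_self hr)))
  rcases hr.1.eq_or_lt with rfl | hr0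
  · simp [hu'0, phim]
  have hg0 : g 0 = 0 := by simp [g, hu'0, phim, zero_rpow (by linarith : N ≠ 0)]
  have hgr : g r = r ^ (N - 1) * (phim m (u' r) + M / N * r) := by
    simp only [g]
    rw [rpow_sub_one hr0.ne']
    field_simp
  have := hg ⟨le_rfl, hr.1.trans hr.2⟩ hr hr.1
  rw [hg0, hgr] at this
  linarith [(mul_nonneg_iff_of_pos_left (rpow_pos_of_pos hr0 (N - 1))).1 this]

lemma neg_rpow_le_deriv (hsol : IsSolutionOn N m f J u u') (hm : 1 < m) (hN : 1 ≤ N)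
    (hu'0 : u' 0 = 0) {R M : ℝ} (hRJ : Icc 0 R ⊆ J) (hfM : ∀ t ∈ Icc 0 R, f (u t) ≤ M)
    (hM : 0 ≤ M) {r : ℝ} (hr : r ∈ Icc 0 R) :
    -((M / N) ^ (m - 1)⁻¹ * r ^ (m - 1)⁻¹) ≤ u' r := by
  have hMN : 0 ≤ M / N := div_nonneg hM (by linarith)
  have := neg_rpow_inv_le_of_neg_le_phim hm (mul_nonneg hMN hr.1)
    (hsol.neg_div_mul_le_phim hm hN hu'0 hRJ hfM hr)
  rwa [mul_rpow hMN hr.1] at this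

lemma sub_le_mul_rpow (hsol : IsSolutionOn N m f J u u') (hm : 1 < m) (hN : 1 ≤ N)
    (hu'0 : u' 0 = 0) {R M : ℝ} (hR : 0 ≤ R) (hRJ : Icc 0 R ⊆ J)
    (hfM : ∀ t ∈ Icc 0 R, f (u t) ≤ M) (hM : 0 ≤ M) :
    u 0 - u R ≤ (M / N) ^ (m - 1)⁻¹ * R ^ (m / (m - 1)) / (m / (m - 1)) := by
  have hm1 : 0 < m - 1 := sub_pos.2 hm
  rw [← show (m - 1)⁻¹ + 1 = m / (m - 1) by field_simp; ring]
  exact sub_le_of_neg_mul_rpow_le_deriv (by linarith [inv_pos.2 hm1]) hR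
    (fun r hr ↦ (hsol.1 r (hRJ hr)).continuousWithinAt.mono hRJ)
    (fun r hr ↦ (hsol.1 r (hRJ (Ioo_subset_Icc_self hr))).mono (Ioo_subset_Icc_self.trans hRJ))
    (fun r hr ↦ hsol.neg_rpow_le_deriv hm hN hu'0 hRJ hfM hM (Ioo_subset_Icc_self hr))

end IsSolutionOn

/-- lower bound for the first time `r_θ` at which the solution
descends from `α` to `θα`. -/
theorem rtheta_lower_bound
    (N m : ℝ) (hm : 1 < m) (hNm : m ≤ N) (f : ℝ → ℝ) (hf : Continuous f)
    (α : ℝ) (hα : 0 < α) (J : Set ℝ) (hJ : IVPDomain J)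
    (u u' : ℝ → ℝ) (hu : IsIVPSolutionOn N m f α J u u')
    (θ : ℝ) (hθ : θ ∈ Set.Ioo (0:ℝ) 1)
    (rθ : ℝ) (hrθJ : rθ ∈ J) (hrθ0 : 0 < rθ) (hrθ : u rθ = θ * α)
    (hrange : ∀ r ∈ Set.Icc (0:ℝ) rθ, θ * α ≤ u r ∧ u r ≤ α)
    (M : ℝ) (hM : M = sSup (f '' Set.Icc (θ * α) α)) (hMpos : 0 < M) :
    ((1 - θ) * (m / (m - 1))) ^ (m - 1) * N * α ^ (m - 1) / M ≤ rθ ^ m := by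
  obtain ⟨hsol, hu0, hu'0⟩ := hu
  have hN : 1 ≤ N := by linarith
  have hm1 : 0 < m - 1 := sub_pos.2 hm
  have hRJ : Icc 0 rθ ⊆ J := by
    rcases hJ with rfl | ⟨R, -, rfl⟩
    · exact fun r hr ↦ hr.1
    · exact fun r hr ↦ ⟨hr.1, hr.2.trans_lt hrθJ.2⟩
  have hfM : ∀ t ∈ Icc 0 rθ, f (u t) ≤ M := fun t ht ↦
    hM ▸ le_csSup (isCompact_Icc.image hf).bddAbove (mem_image_of_mem f (hrange t ht))
  have hcoef : 0 ≤ (1 - θ) * (m / (m - 1)) := mul_nonneg (sub_nonneg.2 hθ.2.le) (by positivity)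
  have hdrop := hsol.sub_le_mul_rpow hm hN hu'0 hrθ0.le hRJ hfM hMpos.le
  rw [hrθ, hu0, le_div_iff₀ (by positivity)] at hdrop
  have hpow : ((1 - θ) * (m / (m - 1)) * α) ^ (m - 1) ≤ M / N * rθ ^ m := by
    have := rpow_le_mul_rpow_of_le_rpow_inv_mul (b := M / N) (c := rθ ^ (m / (m - 1))) hm1
      (mul_nonneg hcoef hα.le) (by positivity) (by positivity) (by linarith)
    rwa [← rpow_mul hrθ0.le, div_mul_cancel₀ m hm1.ne'] at this
  rw [div_le_iff₀ hMpos]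
  calc ((1 - θ) * (m / (m - 1))) ^ (m - 1) * N * α ^ (m - 1)
      = N * ((1 - θ) * (m / (m - 1)) * α) ^ (m - 1) := by rw [mul_rpow hcoef hα.le]; ring
    _ ≤ N * (M / N * rθ ^ m) := by gcongr
    _ = rθ ^ m * M := by field_simp
end
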